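/- For a random variable X with generalized normal density of location μ, scale α and shape β, the fourth central moment equals α⁴ Γ(5/β)/Γ(1/β), and consequently the kurtosis E[(X−μ)⁴]/(Var X)² equals Γ(5/β) Γ(1/β) / Γ(3/β)². -/

import Mathlib

open Real Set MeasureTheory

theorem gennorm_fourth_moment_and_kurtosis (μ α β : ℝ) (hα : 0 < α) (hβ : 0 < β) :
    (∫ x : ℝ, (x - μ) ^ 4 * ((β / (2 * α * Real.Gamma (1 / β))) * Real.exp (-(|x - μ| / α) ^ β))
      = α ^ 4 * Real.Gamma (5 / β) / Real.Gamma (1 / β)) ∧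
    (∫ x : ℝ, (x - μ) ^ 4 * ((β / (2 * α * Real.Gamma (1 / β))) * Real.exp (-(|x - μ| / α) ^ β)))
        / (α ^ 2 * Real.Gamma (3 / β) / Real.Gamma (1 / β)) ^ 2
      = Real.Gamma (5 / β) * Real.Gamma (1 / β) / Real.Gamma (3 / β) ^ 2 := by
  have hΓ1 : 0 < Real.Gamma (1 / β) := Real.Gamma_pos_of_pos (by positivity)
  have hΓ3 : 0 < Real.Gamma (3 / β) := Real.Gamma_pos_of_pos (by positivity)
  have hmain : (∫ x : ℝ, (x - μ) ^ 4 *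
      ((β / (2 * α * Real.Gamma (1 / β))) * Real.exp (-(|x - μ| / α) ^ β)))
      = α ^ 4 * Real.Gamma (5 / β) / Real.Gamma (1 / β) := by
    have h1 : (∫ x : ℝ, (x - μ) ^ 4 *
        ((β / (2 * α * Real.Gamma (1 / β))) * Real.exp (-(|x - μ| / α) ^ β)))
        = ∫ x : ℝ, |x| ^ 4 * ((β / (2 * α * Real.Gamma (1 / β))) * Real.exp (-(|x| / α) ^ β)) := by
      rw [← MeasureTheory.integral_sub_right_eq_self
        (fun x => |x| ^ 4 * ((β / (2 * α * Real.Gamma (1 / β))) * Real.exp (-(|x| / α) ^ β))) μ]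
      congr 1; funext x; rw [Even.pow_abs ⟨2, rfl⟩]
    rw [h1, integral_comp_abs
      (f := fun x => x ^ 4 * ((β / (2 * α * Real.Gamma (1 / β))) * Real.exp (-(x / α) ^ β)))]
    have h2 : (∫ x in Ioi (0:ℝ),
        x ^ 4 * ((β / (2 * α * Real.Gamma (1 / β))) * Real.exp (-(x / α) ^ β)))
        = (β / (2 * α * Real.Gamma (1 / β))) *
          ∫ x in Ioi (0:ℝ), x ^ (4:ℝ) * Real.exp (-(α ^ (-β)) * x ^ β) := by
      rw [← integral_const_mul]
      refine setIntegral_congr_fun measurableSet_Ioi (fun x hx => ?_)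
      have hx' : (0:ℝ) < x := hx
      have harg : -(x / α) ^ β = -(α ^ (-β)) * x ^ β := by
        rw [div_rpow hx'.le hα.le, Real.rpow_neg hα.le]; ring
      rw [harg, ← Real.rpow_natCast x 4]
      push_cast
      ring
    rw [h2, integral_rpow_mul_exp_neg_mul_rpow hβ (by norm_num) (by positivity)]
    rw [← Real.rpow_mul hα.le]
    rw [show ((4:ℝ)+1)/β = 5/β by norm_num,
      show (-β * (-((4:ℝ)+1)/β)) = 5 by field_simp; ring,
      show (5:ℝ) = (4:ℝ)+1 by norm_num, Real.rpow_add hα, Real.rpow_one,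
      show α ^ (4:ℝ) = α ^ (4:ℕ) by rw [show (4:ℝ)=((4:ℕ):ℝ) by norm_num, Real.rpow_natCast]]
    field_simp
  refine ⟨hmain, ?_⟩
  rw [hmain]
  field_simp
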